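/- arXiv:2402.09607 — 3 statements merged into one kernel-verified Lean document; each statement's English description precedes it below -/
import Mathlib

section
/- Let H be a real Hilbert space, let a : H × H → ℝ be a continuous bilinear form that is coercive with constant θ > 0 (i.e. a(x,x) ≥ θ‖x‖² for all x ∈ H), let b : H × H → ℝ be a continuous bilinear form with operator norm ‖b‖ satisfying b(x,x) = 0 for all x ∈ H, and let F : H → ℝ be a continuous linear functional. For g ∈ ℝ, let x_g ∈ H denote the unique element with a(x_g,ψ) − g·b(x_g,ψ) = F(ψ) for all ψ ∈ H. Then for all g₁, g₂ ∈ ℝ one has ‖x_{g₁} − x_{g₂}‖ ≤ (‖b‖ ‖F‖ / θ²) |g₁ − g₂|; i.e. the solution map g ↦ x_g is globally Lipschitz continuous. -/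
/-- Lipschitz dependence of the cell solution on the parameter:
`‖x g₁ − x g₂‖ ≤ (‖b‖ ‖F‖ / θ²) |g₁ − g₂|`. -/
theorem cell_problem_lipschitz_in_parameter
    {H : Type*} [NormedAddCommGroup H] [InnerProductSpace ℝ H] [CompleteSpace H]
    (a : H →L[ℝ] H →L[ℝ] ℝ) (b : H →L[ℝ] H →L[ℝ] ℝ)
    (θ : ℝ) (hθ : 0 < θ) (ha : ∀ x : H, θ * ‖x‖ ^ 2 ≤ a x x)
    (hb : ∀ x : H, b x x = 0)
    (F : H →L[ℝ] ℝ)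
    (x : ℝ → H) (hx : ∀ g : ℝ, ∀ ψ : H, a (x g) ψ - g * b (x g) ψ = F ψ) :
    ∀ g₁ g₂ : ℝ, ‖x g₁ - x g₂‖ ≤ ‖b‖ * ‖F‖ / θ ^ 2 * |g₁ - g₂| := by
  intro g₁ g₂
  set d := x g₁ - x g₂ with hd
  -- uniform bound on ‖x g₁‖
  have hx1 : ‖x g₁‖ ≤ ‖F‖ / θ := by
    have h1 : θ * ‖x g₁‖ ^ 2 ≤ F (x g₁) := by
      have h := hx g₁ (x g₁)
      rw [hb] at h
      have := ha (x g₁)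
      linarith
    have h2 : F (x g₁) ≤ ‖F‖ * ‖x g₁‖ := le_trans (le_abs_self _) (F.le_opNorm _)
    rcases eq_or_lt_of_le (norm_nonneg (x g₁)) with h0 | h0
    · rw [← h0]; positivity
    · rw [div_eq_inv_mul, ← mul_le_mul_iff_right₀ hθ, ← mul_assoc, mul_inv_cancel₀ hθ.ne',
        one_mul]
      have := h1.trans h2
      nlinarith
  -- key identity: a d d = (g₁ - g₂) * b (x g₁) d
  have hkey : θ * ‖d‖ ^ 2 ≤ (g₁ - g₂) * b (x g₁) d := by
    have e1 := hx g₁ d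
    have e2 := hx g₂ d
    have hadd : a d d = (g₁ - g₂) * b (x g₁) d + g₂ * b d d := by
      have h1 : a d d = a (x g₁) d - a (x g₂) d := by
        rw [hd, map_sub]; simp; ring
      have h2 : b d d = b (x g₁) d - b (x g₂) d := by
        rw [hd, map_sub]; simp; ring
      rw [h1, h2]; linear_combination e1 - e2
    rw [hb] at hadd
    calc θ * ‖d‖ ^ 2 ≤ a d d := ha d
      _ = (g₁ - g₂) * b (x g₁) d := by rw [hadd]; ring
  have hbd : (g₁ - g₂) * b (x g₁) d ≤ |g₁ - g₂| * (‖b‖ * ‖x g₁‖ * ‖d‖) := by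
    calc (g₁ - g₂) * b (x g₁) d ≤ |(g₁ - g₂) * b (x g₁) d| := le_abs_self _
      _ = |g₁ - g₂| * |b (x g₁) d| := abs_mul _ _
      _ ≤ |g₁ - g₂| * (‖b‖ * ‖x g₁‖ * ‖d‖) := by
          apply mul_le_mul_of_nonneg_left _ (abs_nonneg _)
          calc |b (x g₁) d| = ‖b (x g₁) d‖ := rfl
            _ ≤ ‖b (x g₁)‖ * ‖d‖ := (b (x g₁)).le_opNorm _
            _ ≤ ‖b‖ * ‖x g₁‖ * ‖d‖ := by
                apply mul_le_mul_of_nonneg_right (b.le_opNorm _) (norm_nonneg _)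
  have hchain : θ * ‖d‖ ^ 2 ≤ |g₁ - g₂| * (‖b‖ * (‖F‖ / θ) * ‖d‖) := by
    refine (hkey.trans hbd).trans ?_
    apply mul_le_mul_of_nonneg_left _ (abs_nonneg _)
    apply mul_le_mul_of_nonneg_right _ (norm_nonneg _)
    exact mul_le_mul_of_nonneg_left hx1 (norm_nonneg b)
  rcases eq_or_lt_of_le (norm_nonneg d) with h0 | h0
  · rw [← h0]; positivity
  · rw [div_eq_mul_inv]
    have hθ2 : (0:ℝ) < θ ^ 2 := by positivity
    rw [← mul_le_mul_iff_right₀ hθ2]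
    have heq : θ ^ 2 * (‖b‖ * ‖F‖ * (θ ^ 2)⁻¹ * |g₁ - g₂|)
        = ‖b‖ * ‖F‖ * |g₁ - g₂| := by field_simp
    rw [heq]
    have h3 : (θ ^ 2 * ‖d‖) * ‖d‖ ≤ (‖b‖ * ‖F‖ * |g₁ - g₂|) * ‖d‖ := by
      have h4 := mul_le_mul_of_nonneg_left hchain hθ.le
      calc (θ ^ 2 * ‖d‖) * ‖d‖ = θ * (θ * ‖d‖ ^ 2) := by ring
        _ ≤ θ * (|g₁ - g₂| * (‖b‖ * (‖F‖ / θ) * ‖d‖)) := h4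
        _ = (‖b‖ * ‖F‖ * |g₁ - g₂|) * ‖d‖ := by field_simp
    exact le_of_mul_le_mul_right h3 h0
end

section
/- Let H be a real Hilbert space, let a : H × H → ℝ be a continuous bilinear form that is coercive with constant θ > 0 (i.e. a(x,x) ≥ θ‖x‖² for all x ∈ H), let b : H × H → ℝ be a continuous bilinear form with operator norm ‖b‖ satisfying b(x,x) = 0 for all x ∈ H, and let F : H → ℝ be a continuous linear functional; for g ∈ ℝ let x_g ∈ H be the unique solution of a(x_g,ψ) − g·b(x_g,ψ) = F(ψ) for all ψ ∈ H. Let G : ℝ → ℝ be locally Lipschitz (Lipschitz on compact sets), let m > 0, and let (u_k) be a sequence in [−m, m] converging to u ∈ [−m, m]. Then there exists a constant C > 0 (depending only on θ, ‖b‖, ‖F‖ and the Lipschitz constant of G on [−m,m]) such that ‖x_{G(u_k)} − x_{G(u)}‖ ≤ C |u_k − u| for all k; in particular x_{G(u_k)} → x_{G(u)} strongly in H. -/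
open Filter Topology

lemma cell_key {H : Type*} [NormedAddCommGroup H] [InnerProductSpace ℝ H]
    (a b : H →L[ℝ] H →L[ℝ] ℝ) (θ : ℝ) (hθ : 0 < θ)
    (ha : ∀ x : H, θ * ‖x‖ ^ 2 ≤ a x x) (hb : ∀ x : H, b x x = 0)
    (F : H →L[ℝ] ℝ) (x : ℝ → H)
    (hx : ∀ g : ℝ, ∀ ψ : H, a (x g) ψ - g * b (x g) ψ = F ψ)
    (g h : ℝ) : ‖x g - x h‖ ≤ |g - h| * ‖b‖ * ‖x h‖ / θ := by
  have hbd : b (x g) (x g - x h) = b (x h) (x g - x h) := by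
    have h0 := hb (x g - x h)
    simp only [map_sub, ContinuousLinearMap.sub_apply] at h0 ⊢
    linarith
  have hadd : a (x g - x h) (x g - x h) = (g - h) * b (x h) (x g - x h) := by
    have h1 := hx g (x g - x h)
    have h2 := hx h (x g - x h)
    rw [hbd] at h1
    simp only [map_sub, ContinuousLinearMap.sub_apply] at h1 h2 ⊢
    nlinarith
  have hbound : (g - h) * b (x h) (x g - x h)
      ≤ |g - h| * ‖b‖ * ‖x h‖ * ‖x g - x h‖ := by
    calc (g - h) * b (x h) (x g - x h) ≤ |(g - h) * b (x h) (x g - x h)| := le_abs_self _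
      _ = |g - h| * ‖b (x h) (x g - x h)‖ := by rw [abs_mul]; rfl
      _ ≤ |g - h| * (‖b‖ * ‖x h‖ * ‖x g - x h‖) := by
          gcongr
          exact b.le_opNorm₂ (x h) (x g - x h)
      _ = |g - h| * ‖b‖ * ‖x h‖ * ‖x g - x h‖ := by ring
  have key : θ * ‖x g - x h‖ ^ 2 ≤ |g - h| * ‖b‖ * ‖x h‖ * ‖x g - x h‖ :=
    le_trans (le_trans (ha _) (le_of_eq hadd)) hbound
  rcases eq_or_lt_of_le (norm_nonneg (x g - x h)) with h0 | h0
  · rw [← h0]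
    positivity
  · rw [le_div_iff₀ hθ]
    nlinarith

/-- Strong convergence of the cell solutions along a convergent sequence of
macroscopic values: with `G` locally Lipschitz (Lipschitz on compact sets) and
`u_k → u` in `[−m, m]`, there is `C > 0` with
`‖x (G (u_k)) − x (G u)‖ ≤ C |u_k − u|`; in particular `x (G (u_k)) → x (G u)`. -/
theorem cell_solutions_converge
    {H : Type*} [NormedAddCommGroup H] [InnerProductSpace ℝ H] [CompleteSpace H]
    (a : H →L[ℝ] H →L[ℝ] ℝ) (b : H →L[ℝ] H →L[ℝ] ℝ)
    (θ : ℝ) (hθ : 0 < θ) (ha : ∀ x : H, θ * ‖x‖ ^ 2 ≤ a x x)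
    (hb : ∀ x : H, b x x = 0)
    (F : H →L[ℝ] ℝ)
    (x : ℝ → H) (hx : ∀ g : ℝ, ∀ ψ : H, a (x g) ψ - g * b (x g) ψ = F ψ)
    (G : ℝ → ℝ) (hG : ∀ s : Set ℝ, IsCompact s → ∃ K : NNReal, LipschitzOnWith K G s)
    (m : ℝ) (hm : 0 < m)
    (u : ℕ → ℝ) (hu : ∀ k, u k ∈ Set.Icc (-m) m)
    (ul : ℝ) (hul : ul ∈ Set.Icc (-m) m)
    (hconv : Tendsto u atTop (𝓝 ul)) :
    ∃ C : ℝ, 0 < C ∧ (∀ k, ‖x (G (u k)) - x (G ul)‖ ≤ C * |u k - ul|) ∧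
      Tendsto (fun k => x (G (u k))) atTop (𝓝 (x (G ul))) := by
  obtain ⟨K, hK⟩ := hG (Set.Icc (-m) m) isCompact_Icc
  set C : ℝ := (K : ℝ) * ‖b‖ * ‖x (G ul)‖ / θ + 1 with hC
  have hCpos : 0 < C := by positivity
  have hmain : ∀ k, ‖x (G (u k)) - x (G ul)‖ ≤ C * |u k - ul| := by
    intro k
    have hlip : |G (u k) - G ul| ≤ (K : ℝ) * |u k - ul| := by
      have := hK.dist_le_mul (u k) (hu k) ul hul
      simpa [Real.dist_eq] using this
    calc ‖x (G (u k)) - x (G ul)‖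
        ≤ |G (u k) - G ul| * ‖b‖ * ‖x (G ul)‖ / θ :=
          cell_key a b θ hθ ha hb F x hx (G (u k)) (G ul)
      _ ≤ ((K : ℝ) * |u k - ul|) * ‖b‖ * ‖x (G ul)‖ / θ := by gcongr
      _ = ((K : ℝ) * ‖b‖ * ‖x (G ul)‖ / θ) * |u k - ul| := by ring
      _ ≤ C * |u k - ul| := by
          have hle : ((K : ℝ) * ‖b‖ * ‖x (G ul)‖ / θ) ≤ C := by
            rw [hC]; linarith
          gcongr
  refine ⟨C, hCpos, hmain, ?_⟩
  rw [tendsto_iff_norm_sub_tendsto_zero]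
  have h2 : Tendsto (fun k => u k - ul) atTop (𝓝 0) := by
    simpa using hconv.sub_const ul
  have h1 : Tendsto (fun k => |u k - ul|) atTop (𝓝 0) := by
    simpa using h2.abs
  have hlim : Tendsto (fun k => C * |u k - ul|) atTop (𝓝 0) := by
    simpa using h1.const_mul C
  exact squeeze_zero (fun k => norm_nonneg _) hmain hlim
end

section
/- Let H be a real Hilbert space, let a : H × H → ℝ be a continuous bilinear form that is coercive with constant θ > 0 (i.e. a(x,x) ≥ θ‖x‖² for all x ∈ H), let b : H × H → ℝ be a continuous bilinear form with operator norm ‖b‖ satisfying b(x,x) = 0 for all x ∈ H, and let F : H → ℝ be a continuous linear functional; for g ∈ ℝ let x_g ∈ H be the unique solution of a(x_g,ψ) − g·b(x_g,ψ) = F(ψ) for all ψ ∈ H. Let ℓ : H → ℝ be a continuous linear functional. Then the map g ↦ ℓ(x_g) is globally Lipschitz on ℝ with Lipschitz constant at most ‖ℓ‖·‖b‖·‖F‖/θ². -/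
/-- Lipschitz continuity of the parametrized dispersion tensor (abstract form):
for a continuous linear functional `ℓ`, the map `g ↦ ℓ(x_g)` is globally Lipschitz
with constant at most `‖ℓ‖ ‖b‖ ‖F‖ / θ²`. -/
theorem dispersion_tensor_lipschitz
    {H : Type*} [NormedAddCommGroup H] [InnerProductSpace ℝ H] [CompleteSpace H]
    (a : H →L[ℝ] H →L[ℝ] ℝ) (b : H →L[ℝ] H →L[ℝ] ℝ)
    (θ : ℝ) (hθ : 0 < θ) (ha : ∀ x : H, θ * ‖x‖ ^ 2 ≤ a x x)
    (hb : ∀ x : H, b x x = 0)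
    (F : H →L[ℝ] ℝ)
    (x : ℝ → H) (hx : ∀ g : ℝ, ∀ ψ : H, a (x g) ψ - g * b (x g) ψ = F ψ)
    (ℓ : H →L[ℝ] ℝ) :
    ∀ g₁ g₂ : ℝ, |ℓ (x g₁) - ℓ (x g₂)| ≤ ‖ℓ‖ * ‖b‖ * ‖F‖ / θ ^ 2 * |g₁ - g₂| := by
  intro g₁ g₂
  -- a priori bound : θ ‖x g‖ ≤ ‖F‖
  have hbound : ∀ g : ℝ, θ * ‖x g‖ ≤ ‖F‖ := by
    intro g
    have heq : a (x g) (x g) = F (x g) := by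
      have := hx g (x g); rw [hb (x g)] at this; linarith
    have h1 : θ * ‖x g‖ ^ 2 ≤ F (x g) := heq ▸ ha (x g)
    have h2 : F (x g) ≤ ‖F‖ * ‖x g‖ := le_trans (le_abs_self _) (F.le_opNorm _)
    have h3 := le_trans h1 h2
    rcases eq_or_lt_of_le (norm_nonneg (x g)) with h0 | hpos
    · rw [← h0, mul_zero]; exact norm_nonneg F
    · nlinarith
  set u : H := x g₁ - x g₂ with hu
  -- difference equation at ψ = u
  have key : a u u = (g₁ - g₂) * b (x g₂) u := by
    have e1 := hx g₁ u
    have e2 := hx g₂ u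
    have hbu : b u u = 0 := hb u
    have hsub : a u u = a (x g₁) u - a (x g₂) u := by simp [hu]
    have hbsub : b u u = b (x g₁) u - b (x g₂) u := by simp [hu]
    have hb12 : b (x g₁) u = b (x g₂) u := by
      have := hbsub; rw [hbu] at this; linarith
    have h4 : a (x g₁) u - a (x g₂) u = g₁ * b (x g₁) u - g₂ * b (x g₂) u := by
      linarith
    rw [hsub, h4, hb12]; ring
  have hθu : θ ^ 2 * ‖u‖ ^ 2 ≤ |g₁ - g₂| * (‖b‖ * ‖F‖ * ‖u‖) := by
    have c1 : θ * ‖u‖ ^ 2 ≤ |g₁ - g₂| * (‖b‖ * ‖x g₂‖ * ‖u‖) :=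
      calc θ * ‖u‖ ^ 2 ≤ a u u := ha u
        _ = (g₁ - g₂) * b (x g₂) u := key
        _ ≤ |(g₁ - g₂) * b (x g₂) u| := le_abs_self _
        _ = |g₁ - g₂| * |b (x g₂) u| := abs_mul _ _
        _ ≤ |g₁ - g₂| * (‖b‖ * ‖x g₂‖ * ‖u‖) := by
            gcongr |g₁ - g₂| * ?_
            exact (b.le_opNorm₂ (x g₂) u)
    have c2 := mul_le_mul_of_nonneg_left c1 hθ.le
    have c3 : θ * ‖x g₂‖ ≤ ‖F‖ := hbound g₂
    have c4 : |g₁ - g₂| * (‖b‖ * ‖u‖) * (θ * ‖x g₂‖) ≤ |g₁ - g₂| * (‖b‖ * ‖u‖) * ‖F‖ :=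
      mul_le_mul_of_nonneg_left c3 (by positivity)
    nlinarith [c2, c4]
  have hun : ‖u‖ ≤ ‖b‖ * ‖F‖ / θ ^ 2 * |g₁ - g₂| := by
    have hθ2 : (0:ℝ) < θ ^ 2 := by positivity
    rcases eq_or_lt_of_le (norm_nonneg u) with h0 | hpos
    · rw [← h0]; positivity
    · rw [div_mul_eq_mul_div, le_div_iff₀ hθ2]
      nlinarith
  calc |ℓ (x g₁) - ℓ (x g₂)| = |ℓ u| := by rw [hu]; simp
    _ ≤ ‖ℓ‖ * ‖u‖ := ℓ.le_opNorm u
    _ ≤ ‖ℓ‖ * (‖b‖ * ‖F‖ / θ ^ 2 * |g₁ - g₂|) := by gcongr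
    _ = ‖ℓ‖ * ‖b‖ * ‖F‖ / θ ^ 2 * |g₁ - g₂| := by ring
end
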